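/- Let a₁(t), …, a_{2N}(t) be positive functions of t, each converging to a nonnegative limit as t → ∞ with a₁(∞) + a₃(∞) + ⋯ + a_{2N-1}(∞) = a_i > 0 and a₂(∞) + ⋯ + a_{2N}(∞) = a_p > 0, and let w(t) → ∞. Define the continued fractions x_{2N}(t) = [a₁(t), a₂(t)e^{-w(t)}, a₃(t), …, a_{2N}(t)e^{-w(t)}] and x_{2N-1}(t) = [a₁(t), a₂(t)e^{-w(t)}, …, a_{2N-1}(t)]. Then x_{2N-1}(t) ~ a_i and x_{2N}(t) ~ (1/a_p)·e^{w(t)} as t → ∞. -/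

import Mathlib

/-!
Put `ε = e^{-w} → 0`. Peeling off the first two entries, the odd-length fraction `X` satisfies
`X = a₀ + X'/(1 + a₁εX')` and, for the even-length fraction `Y`, `Z = (εY)⁻¹` satisfies `Z = (a₁ + Z')/(a₀ε(a₁ + Z') + 1)`,
where `X'`, `Z'` are the same quantities for the sequence shifted by two. Both right-hand sides
are continuous at `ε = 0`, where they become `a₀ + X'` and `a₁ + Z'`; so by induction `X` tends
to the sum of the even-indexed limits and `Z` to the sum of the odd-indexed ones, with no case
distinction on whether some partial sum of limits vanishes.
-/

open Real Filter

noncomputable def contFrac : List ℝ → ℝ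
  | [] => 0
  | b :: l => b + 1 / contFrac l

open Finset Topology

theorem contFrac_nonneg {l : List ℝ} (h : ∀ x ∈ l, 0 < x) : 0 ≤ contFrac l := by
  induction l with
  | nil => simp [contFrac]
  | cons b l ih =>
    rw [List.forall_mem_cons] at h
    have := h.1
    have := ih h.2
    rw [contFrac]
    positivity

theorem contFrac_cons_pos {b : ℝ} {l : List ℝ} (h : ∀ x ∈ b :: l, 0 < x) :
    0 < contFrac (b :: l) := by
  rw [List.forall_mem_cons] at h
  have := h.1
  have := contFrac_nonneg h.2
  rw [contFrac]
  positivity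

/-- `[a₀, a₁ε, a₂, a₃ε, …]` with `n` entries. Indices are 0-based, so the paper's
`a₁, a₃, …` are the `a j` with `j` even. -/
noncomputable def altContFrac (a : ℕ → ℝ) (ε : ℝ) (n : ℕ) : ℝ :=
  contFrac (List.ofFn fun i : Fin n => if i.val % 2 = 0 then a i else a i * ε)

theorem altContFrac_dite_eq_contFrac_ofFn {m n : ℕ} (hnm : n ≤ m) (a : Fin m → ℝ) (ε : ℝ) :
    altContFrac (fun j => if h : j < m then a ⟨j, h⟩ else 1) ε n =
      contFrac (List.ofFn fun i : Fin n =>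
        if i.val % 2 = 0 then a ⟨i, by omega⟩ else a ⟨i, by omega⟩ * ε) := by
  unfold altContFrac
  congr
  funext i
  simp [show (i : ℕ) < m by omega]

section altContFrac

variable {a : ℕ → ℝ} {ε : ℝ}

theorem altContFrac_add_two (n : ℕ) :
    altContFrac a ε (n + 2) =
      a 0 + 1 / (a 1 * ε + 1 / altContFrac (fun j => a (j + 2)) ε n) := by
  simp [altContFrac, List.ofFn_succ, contFrac, add_assoc]

theorem forall_mem_ofFn_alternating_pos (ha : ∀ j, 0 < a j) (hε : 0 < ε) (n : ℕ) :
    ∀ x ∈ List.ofFn (fun i : Fin n => if i.val % 2 = 0 then a i else a i * ε), 0 < x := by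
  simp only [List.forall_mem_ofFn_iff]
  intro i
  split_ifs
  exacts [ha i, mul_pos (ha i) hε]

theorem altContFrac_nonneg (ha : ∀ j, 0 < a j) (hε : 0 < ε) (n : ℕ) :
    0 ≤ altContFrac a ε n :=
  contFrac_nonneg (forall_mem_ofFn_alternating_pos ha hε n)

theorem altContFrac_succ_pos (ha : ∀ j, 0 < a j) (hε : 0 < ε) (n : ℕ) :
    0 < altContFrac a ε (n + 1) := by
  have h := forall_mem_ofFn_alternating_pos ha hε (n + 1)
  rw [List.ofFn_succ] at h
  rw [altContFrac, List.ofFn_succ]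
  exact contFrac_cons_pos h

theorem altContFrac_add_three (ha : ∀ j, 0 < a j) (hε : 0 < ε) (n : ℕ) :
    altContFrac a ε (n + 3) = a 0 + altContFrac (fun j => a (j + 2)) ε (n + 1) /
      (1 + a 1 * ε * altContFrac (fun j => a (j + 2)) ε (n + 1)) := by
  have := altContFrac_succ_pos (fun j => ha (j + 2)) hε n
  have := ha 1
  rw [altContFrac_add_two]
  field_simp
  ring

theorem inv_mul_altContFrac_add_two (ha : ∀ j, 0 < a j) (hε : 0 < ε) (n : ℕ) :
    (ε * altContFrac a ε (n + 2))⁻¹ =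
      (a 1 + (ε * altContFrac (fun j => a (j + 2)) ε n)⁻¹) /
        (a 0 * ε * (a 1 + (ε * altContFrac (fun j => a (j + 2)) ε n)⁻¹) + 1) := by
  set Y := altContFrac (fun j => a (j + 2)) ε n
  have hZ : 0 ≤ (ε * Y)⁻¹ :=
    inv_nonneg.2 (mul_nonneg hε.le (altContFrac_nonneg (fun j => ha (j + 2)) hε n))
  -- also for the empty fraction `Y = 0`, as `0⁻¹ = 0`
  have hY : a 1 * ε + 1 / Y = ε * (a 1 + (ε * Y)⁻¹) := by
    rw [mul_add, mul_inv, mul_inv_cancel_left₀ hε.ne', one_div, mul_comm]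
  have := ha 1
  rw [altContFrac_add_two, hY]
  generalize (ε * Y)⁻¹ = Z at hZ ⊢
  have : 0 < a 1 + Z := by positivity
  field_simp

end altContFrac

theorem sum_range_add_two {M : Type*} [AddCommMonoid M] (f : ℕ → M) (n : ℕ) :
    ∑ j ∈ range (n + 2), f j = f 0 + f 1 + ∑ j ∈ range n, f (j + 2) := by
  rw [sum_range_succ', sum_range_succ']
  simp only [zero_add, add_assoc]
  abel

section Limits

variable {α : Type*} {l : Filter α} {a : ℕ → α → ℝ} {ε : α → ℝ} {L : ℕ → ℝ}

theorem tendsto_altContFrac_odd (ha : ∀ j x, 0 < a j x) (hεpos : ∀ x, 0 < ε x)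
    (hε : Tendsto ε l (𝓝 0)) (hL : ∀ j, Tendsto (a j) l (𝓝 (L j))) (k : ℕ) :
    Tendsto (fun x => altContFrac (a · x) (ε x) (2 * k + 1)) l
      (𝓝 (∑ j ∈ range (2 * k + 1), if j % 2 = 0 then L j else 0)) := by
  induction k generalizing a L with
  | zero => simpa [altContFrac, contFrac] using hL 0
  | succ k ih =>
    have hX := ih (fun j => ha (j + 2)) (fun j => hL (j + 2))
    have hlim := (hL 0).add
      (hX.div ((tendsto_const_nhds (x := (1 : ℝ))).add (((hL 1).mul hε).mul hX)) (by simp))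
    simp only [Pi.div_def, mul_zero, zero_mul, add_zero, div_one] at hlim
    rw [show 2 * (k + 1) + 1 = 2 * k + 1 + 2 by ring, sum_range_add_two]
    simp only [Nat.zero_mod, Nat.one_mod, Nat.add_mod_right, one_ne_zero, ↓reduceIte, add_zero]
    simpa only [altContFrac_add_three (ha · _) (hεpos _)] using hlim

theorem tendsto_inv_mul_altContFrac_even (ha : ∀ j x, 0 < a j x) (hεpos : ∀ x, 0 < ε x)
    (hε : Tendsto ε l (𝓝 0)) (hL : ∀ j, Tendsto (a j) l (𝓝 (L j))) (k : ℕ) :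
    Tendsto (fun x => (ε x * altContFrac (a · x) (ε x) (2 * k))⁻¹) l
      (𝓝 (∑ j ∈ range (2 * k), if j % 2 = 1 then L j else 0)) := by
  induction k generalizing a L with
  | zero => simpa [altContFrac, contFrac] using tendsto_const_nhds
  | succ k ih =>
    have hZ := (hL 1).add (ih (fun j => ha (j + 2)) (fun j => hL (j + 2)))
    have hlim :=
      hZ.div ((((hL 0).mul hε).mul hZ).add (tendsto_const_nhds (x := (1 : ℝ)))) (by simp)
    simp only [Pi.div_def, mul_zero, zero_mul, zero_add, div_one] at hlim
    rw [show 2 * (k + 1) = 2 * k + 2 by ring, sum_range_add_two]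
    simp only [Nat.zero_mod, Nat.one_mod, Nat.add_mod_right, zero_ne_one, ↓reduceIte, zero_add]
    simpa only [inv_mul_altContFrac_add_two (ha · _) (hεpos _)] using hlim

end Limits

/-- If the band thicknesses `a₁(t), …, a_{2N}(t)` converge to nonnegative limits whose
odd-indexed sum is `a_i > 0` and even-indexed sum is `a_p > 0`, and `w(t) → ∞`, then the
continued fractions `x_{2N-1}(t) = [a₁, a₂e^{-w}, …, a_{2N-1}]` and
`x_{2N}(t) = [a₁, a₂e^{-w}, …, a_{2N}e^{-w}]` satisfy `x_{2N-1}(t) ~ a_i` and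
`x_{2N}(t) ~ (1/a_p)·e^{w(t)}`. -/
theorem stmt11 (N : ℕ) (hN : 0 < N) (a : Fin (2 * N) → ℝ → ℝ) (L : Fin (2 * N) → ℝ)
    (w : ℝ → ℝ) (aᵢ aₚ : ℝ)
    (hapos : ∀ j t, 0 < a j t)
    (hlim : ∀ j, Tendsto (a j) atTop (nhds (L j)))
    (hai : ∑ j ∈ Finset.univ.filter (fun j : Fin (2 * N) => j.val % 2 = 0), L j = aᵢ)
    (hap : ∑ j ∈ Finset.univ.filter (fun j : Fin (2 * N) => j.val % 2 = 1), L j = aₚ)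
    (haipos : 0 < aᵢ) (happos : 0 < aₚ)
    (hw : Tendsto w atTop atTop) :
    Tendsto (fun t =>
        contFrac (List.ofFn (fun i : Fin (2 * N - 1) =>
          if i.val % 2 = 0 then a ⟨i.val, by omega⟩ t
          else a ⟨i.val, by omega⟩ t * Real.exp (-w t))) / aᵢ)
      atTop (nhds 1) ∧
    Tendsto (fun t =>
        contFrac (List.ofFn (fun i : Fin (2 * N) =>
          if i.val % 2 = 0 then a i t else a i t * Real.exp (-w t))) /
        ((1 / aₚ) * Real.exp (w t)))
      atTop (nhds 1) := by
  set A : ℕ → ℝ → ℝ := fun j t => if h : j < 2 * N then a ⟨j, h⟩ t else 1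
  set M : ℕ → ℝ := fun j => if h : j < 2 * N then L ⟨j, h⟩ else 1
  have hApos : ∀ j t, 0 < A j t := fun j t => by
    by_cases h : j < 2 * N <;> simp [A, h, hapos]
  have hAlim : ∀ j, Tendsto (A j) atTop (𝓝 (M j)) := fun j => by
    by_cases h : j < 2 * N <;> simp [A, M, h, hlim]
  have hε : Tendsto (fun t => exp (-w t)) atTop (𝓝 0) := tendsto_exp_neg_atTop_nhds_zero.comp hw
  have hsum (p : ℕ) : ∑ j ∈ univ.filter (fun j : Fin (2 * N) => j.val % 2 = p), L j =
      ∑ j ∈ range (2 * N), if j % 2 = p then M j else 0 := by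
    rw [sum_filter, ← Fin.sum_univ_eq_sum_range]
    simp [M]
  have hodd_sum : ∑ j ∈ range (2 * (N - 1) + 1), (if j % 2 = 0 then M j else 0) = aᵢ := by
    rw [← hai, hsum, show 2 * N = 2 * (N - 1) + 1 + 1 by omega, sum_range_succ _ (2 * (N - 1) + 1),
      if_neg (by omega), add_zero]
  have hodd := tendsto_altContFrac_odd hApos (fun t => exp_pos _) hε hAlim (N - 1)
  rw [hodd_sum, show 2 * (N - 1) + 1 = 2 * N - 1 by omega] at hodd
  have heven := tendsto_inv_mul_altContFrac_even hApos (fun t => exp_pos _) hε hAlim N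
  rw [← hsum, hap] at heven
  refine ⟨?_, ?_⟩
  · rw [← div_self haipos.ne']
    exact (hodd.div_const aᵢ).congr fun t =>
      congrArg (· / aᵢ) (altContFrac_dite_eq_contFrac_ofFn (by omega) (a · t) _)
  · rw [← mul_inv_cancel₀ happos.ne']
    refine ((heven.inv₀ happos.ne').const_mul aₚ).congr fun t => ?_
    rw [inv_inv, altContFrac_dite_eq_contFrac_ofFn le_rfl (a · t), exp_neg]
    field_simp
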